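/- Let k ∈ ℂ, ω = e^{2πi/3}, and suppose |ω^{j−1}k − 2nπ| ≥ π/6 for all n ∈ ℤ and j = 1,2,3. Let Z(k) = −(4/3) sin(k/2) sin(ωk/2) sin(ω²k/2) and Ξ(k) = exp(|Im(k/2)| + |Im(ωk/2)| + |Im(ω²k/2)|). Then there is an absolute constant C_π > 0 (independent of k) such that |Z(k)| > (4/(3C_π))·Ξ(k). -/

import Mathlib

/-!
Since `‖sin z‖² = sin² (Re z) + sinh² (Im z)`, the norm `‖sin z‖` dominates both `|sinh (Im z)|`
and `|sin (Re z)|`. The first controls `e^{|Im z|} ≤ 1 + 2 |sinh (Im z)|`; with Jordan's inequality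
`|sin x| ≥ (2/π) dist(x, πℤ)` the two give `dist(z, πℤ) ≤ π ‖sin z‖`. So at distance `≥ π/12`
from `πℤ` the sine is bounded below and `e^{|Im z|} ≤ 14 ‖sin z‖`; apply this to `k/2`, `ωk/2`,
`ω²k/2` and multiply.
-/

open Real

theorem Real.exp_abs_le_one_add_two_mul_abs_sinh (y : ℝ) : exp |y| ≤ 1 + 2 * |sinh y| := by
  rw [abs_sinh, sinh_eq]
  linarith [exp_le_one_iff.2 (neg_nonpos.2 (abs_nonneg y))]

theorem Real.abs_le_abs_sinh (y : ℝ) : |y| ≤ |sinh y| := by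
  rw [abs_sinh]
  exact self_le_sinh_iff.2 (abs_nonneg y)

theorem Real.abs_sub_round_div_pi_mul_pi_le (x : ℝ) : |x - round (x / π) * π| ≤ π / 2 := by
  have hx : x - round (x / π) * π = (x / π - round (x / π)) * π := by field_simp
  rw [hx, abs_mul, abs_of_pos pi_pos]
  nlinarith [abs_sub_round (x / π), pi_pos]

namespace Complex

theorem norm_sin_sq (z : ℂ) : ‖sin z‖ ^ 2 = Real.sin z.re ^ 2 + Real.sinh z.im ^ 2 := by
  rw [sin_eq, ← ofReal_sin, ← ofReal_cos, ← ofReal_cosh, ← ofReal_sinh, ← ofReal_mul,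
    ← ofReal_mul, norm_add_mul_I, sq_sqrt (by positivity)]
  linear_combination Real.sin z.re ^ 2 * Real.cosh_sq z.im +
    Real.sinh z.im ^ 2 * Real.sin_sq_add_cos_sq z.re

theorem abs_sin_re_le_norm_sin (z : ℂ) : |Real.sin z.re| ≤ ‖sin z‖ :=
  abs_le_of_sq_le_sq (by nlinarith [norm_sin_sq z]) (norm_nonneg _)

theorem abs_sinh_im_le_norm_sin (z : ℂ) : |Real.sinh z.im| ≤ ‖sin z‖ :=
  abs_le_of_sq_le_sq (by nlinarith [norm_sin_sq z]) (norm_nonneg _)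

theorem exists_norm_sub_int_mul_pi_le (z : ℂ) : ∃ n : ℤ, ‖z - n * π‖ ≤ π * ‖sin z‖ := by
  refine ⟨round (z.re / π), ?_⟩
  set t := z.re - round (z.re / π) * π
  calc ‖z - round (z.re / π) * π‖ ≤ |t| + |z.im| := by
        simpa using norm_le_abs_re_add_abs_im (z - round (z.re / π) * π)
    _ ≤ π / 2 * |Real.sin t| + |Real.sinh z.im| := by
        gcongr ?_ + ?_
        · calc |t| = π / 2 * (2 / π * |t|) := by field_simp
            _ ≤ π / 2 * |Real.sin t| :=
              by gcongr; exact mul_abs_le_abs_sin (Real.abs_sub_round_div_pi_mul_pi_le z.re)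
        · exact Real.abs_le_abs_sinh z.im
    _ = π / 2 * |Real.sin z.re| + |Real.sinh z.im| := by simp [t, Real.sin_sub_int_mul_pi]
    _ ≤ π / 2 * ‖sin z‖ + ‖sin z‖ := by
        gcongr
        · exact abs_sin_re_le_norm_sin z
        · exact abs_sinh_im_le_norm_sin z
    _ ≤ π * ‖sin z‖ := by nlinarith [pi_gt_three, norm_nonneg (sin z)]

theorem le_norm_sin_of_forall_le_norm_sub_int_mul_pi {z : ℂ} {δ : ℝ}
    (h : ∀ n : ℤ, δ * π ≤ ‖z - n * π‖) : δ ≤ ‖sin z‖ := by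
  obtain ⟨n, hn⟩ := exists_norm_sub_int_mul_pi_le z
  exact le_of_mul_le_mul_right (by linarith [h n]) pi_pos

theorem exp_abs_im_le_mul_norm_sin {z : ℂ} {δ : ℝ} (hδ : 0 < δ)
    (h : ∀ n : ℤ, δ * π ≤ ‖z - n * π‖) : Real.exp |z.im| ≤ (δ⁻¹ + 2) * ‖sin z‖ := by
  have hsin := le_norm_sin_of_forall_le_norm_sub_int_mul_pi h
  have hone : 1 ≤ δ⁻¹ * ‖sin z‖ := by rwa [le_inv_mul_iff₀ hδ, mul_one]
  linarith [Real.exp_abs_le_one_add_two_mul_abs_sinh z.im, abs_sinh_im_le_norm_sin z]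

theorem exp_abs_im_half_le_mul_norm_sin_half {w : ℂ}
    (h : ∀ n : ℤ, π / 6 ≤ ‖w - 2 * n * π‖) : Real.exp |(w / 2).im| ≤ 14 * ‖sin (w / 2)‖ := by
  have hhalf : ∀ n : ℤ, (12 : ℝ)⁻¹ * π ≤ ‖w / 2 - n * π‖ := fun n => by
    rw [show w / 2 - n * π = (w - 2 * n * π) / 2 by ring, norm_div, Complex.norm_two]
    linarith [h n]
  convert exp_abs_im_le_mul_norm_sin (by norm_num) hhalf using 2
  norm_num

end Complex

theorem Z_lower_bound_general
    (ω : ℂ) :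
    ∃ C : ℝ, 0 < C ∧ ∀ k : ℂ,
      (∀ j : ℕ, (j = 1 ∨ j = 2 ∨ j = 3) → ∀ n : ℤ,
        Real.pi / 6 ≤ ‖ω ^ (j - 1) * k - 2 * (n : ℂ) * Real.pi‖) →
      4 / (3 * C) * Real.exp (|(k / 2).im| + |(ω * k / 2).im| + |(ω ^ 2 * k / 2).im|) <
        ‖-(4 / 3) * Complex.sin (k / 2) * Complex.sin (ω * k / 2) *
          Complex.sin (ω ^ 2 * k / 2)‖ := by
  refine ⟨2 * 14 ^ 3, by norm_num, fun k hk => ?_⟩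
  have h₁ := Complex.exp_abs_im_half_le_mul_norm_sin_half (by simpa using hk 1 (by simp))
  have h₂ := Complex.exp_abs_im_half_le_mul_norm_sin_half (by simpa using hk 2 (by simp))
  have h₃ := Complex.exp_abs_im_half_le_mul_norm_sin_half (by simpa using hk 3 (by simp))
  have hprod := mul_le_mul (mul_le_mul h₁ h₂ (by positivity) (by positivity)) h₃
    (by positivity) (by positivity)
  rw [Real.exp_add, Real.exp_add, norm_mul, norm_mul, norm_mul, norm_neg,
    show ‖(4 / 3 : ℂ)‖ = 4 / 3 by norm_num [Complex.norm_div]]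
  have hpos : 0 < Real.exp |(k / 2).im| * Real.exp |(ω * k / 2).im| *
      Real.exp |(ω ^ 2 * k / 2).im| := by positivity
  nlinarith

/-- Lower bound for `Z(k) = -(4/3) sin(k/2) sin(ωk/2) sin(ω²k/2)` away from its zeros:
there is an absolute constant `C_π > 0` with `|Z(k)| > (4/(3 C_π)) Ξ(k)` whenever
`|ω^{j-1}k − 2nπ| ≥ π/6` for all `n ∈ ℤ`, `j = 1,2,3`. -/
theorem Z_lower_bound
    (ω : ℂ) (hω : ω = Complex.exp (2 * (Real.pi : ℂ) * Complex.I / 3)) :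
    ∃ C : ℝ, 0 < C ∧ ∀ k : ℂ,
      (∀ j : ℕ, (j = 1 ∨ j = 2 ∨ j = 3) → ∀ n : ℤ,
        Real.pi / 6 ≤ ‖ω ^ (j - 1) * k - 2 * (n : ℂ) * Real.pi‖) →
      4 / (3 * C) * Real.exp (|(k / 2).im| + |(ω * k / 2).im| + |(ω ^ 2 * k / 2).im|) <
        ‖-(4 / 3) * Complex.sin (k / 2) * Complex.sin (ω * k / 2) *
          Complex.sin (ω ^ 2 * k / 2)‖ :=
  Z_lower_bound_general ω
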